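/- arXiv:2107.13416 — 4 statements merged into one kernel-verified Lean document; each statement's English description precedes it below -/
import Mathlib

section
/- Let $h>0$ and let $(\gamma_j)_{j\in\mathbb{Z}}$ be a positive summable sequence and $(w_j)_{j\in\mathbb{Z}^*}$ a nonnegative sequence with $w_j=w_{-j}$ for all $j\neq 0$. Assume there is $C_P>0$ such that $\gamma_j\gamma_k\le C_P(\gamma_j+\gamma_k)w_{j-k}$ for all $j\neq k$. Then for any square-summable (against $\gamma$) sequence $g=(g_j)_{j\in\mathbb{Z}}$ with $\sum_{j}g_j\gamma_j h=0$, one has $\sum_j g_j^2\gamma_j h \le \frac{C_P}{\sum_j \gamma_j h}\sum_{j\neq k} w_{j-k}(g_j-g_k)^2\gamma_k h^2$. -/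
/-!
With weights `μ j = γ j * h` of total mass `M`, expanding the square gives
`∑_{j,k} (g j - g k)² μ j μ k = 2 M ∑_j g j² μ j - 2 (∑_j g j μ j)²`, and the mean-zero condition
kills the last term. The hypothesis on `γ` bounds each summand by
`C_P h² (γ j + γ k) w (j - k) (g j - g k)²`, which, `w` being even, sums to twice the nonlocal energy.
-/

section WeightedVariance

variable {ι : Type*} {μ g : ι → ℝ}

theorem summable_mul_of_summable_sq_mul (hμ : ∀ i, 0 ≤ μ i) (hμs : Summable μ)
    (hg : Summable fun i => g i ^ 2 * μ i) : Summable fun i => g i * μ i := by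
  refine ((hg.add hμs).div_const 2).of_norm_bounded fun i => ?_
  rw [Real.norm_eq_abs, abs_mul, abs_of_nonneg (hμ i)]
  nlinarith [hμ i, mul_nonneg (hμ i) (sq_nonneg (|g i| - 1)), sq_abs (g i)]

theorem hasSum_sq_sub_mul_mul (hμ : ∀ i, 0 ≤ μ i) (hμs : Summable μ)
    (hg : Summable fun i => g i ^ 2 * μ i) :
    HasSum (fun p : ι × ι => (g p.1 - g p.2) ^ 2 * μ p.1 * μ p.2)
      (2 * ((∑' i, μ i) * (∑' i, g i ^ 2 * μ i) - (∑' i, g i * μ i) ^ 2)) := by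
  have hgμ := summable_mul_of_summable_sq_mul hμ hμs hg
  have hg2μ : ∀ i, 0 ≤ g i ^ 2 * μ i := fun i => mul_nonneg (sq_nonneg _) (hμ i)
  have hleft := hg.hasSum.mul hμs.hasSum (hg.mul_of_nonneg hμs hg2μ hμ)
  have hright := hμs.hasSum.mul hg.hasSum (hμs.mul_of_nonneg hg hμ hg2μ)
  have hcross := hgμ.hasSum.mul hgμ.hasSum
    (summable_mul_of_summable_norm hgμ.norm hgμ.norm)
  rw [show 2 * ((∑' i, μ i) * (∑' i, g i ^ 2 * μ i) - (∑' i, g i * μ i) ^ 2) =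
      (∑' i, g i ^ 2 * μ i) * (∑' i, μ i) - 2 * ((∑' i, g i * μ i) * (∑' i, g i * μ i)) +
        (∑' i, μ i) * (∑' i, g i ^ 2 * μ i) by ring]
  exact ((hleft.sub (hcross.mul_left 2)).add hright).congr_fun fun p => by ring

end WeightedVariance

section NonlocalEnergy

variable {G : Type*} [AddGroup G] [DecidableEq G]

def nonlocalEnergyTerm (h : ℝ) (γ w g : G → ℝ) (p : G × G) : ℝ :=
  if p.1 = p.2 then 0 else w (p.1 - p.2) * (g p.1 - g p.2) ^ 2 * γ p.2 * h ^ 2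

theorem sq_sub_mul_mul_le_nonlocalEnergyTerm_add_swap {h C : ℝ} {γ w g : G → ℝ}
    (hw : ∀ j, j ≠ 0 → w j = w (-j))
    (hγ : ∀ j k, j ≠ k → γ j * γ k ≤ C * (γ j + γ k) * w (j - k)) (p : G × G) :
    (g p.1 - g p.2) ^ 2 * (γ p.1 * h) * (γ p.2 * h) ≤
      C * (nonlocalEnergyTerm h γ w g p + nonlocalEnergyTerm h γ w g p.swap) := by
  obtain ⟨j, k⟩ := p
  by_cases hjk : j = k
  · simp [nonlocalEnergyTerm, hjk]
  have hw' : w (k - j) = w (j - k) := by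
    rw [hw (k - j) (sub_ne_zero.mpr (Ne.symm hjk)), neg_sub]
  simp only [nonlocalEnergyTerm, Prod.swap, if_neg hjk, if_neg (Ne.symm hjk), hw']
  calc (g j - g k) ^ 2 * (γ j * h) * (γ k * h)
      = ((g j - g k) ^ 2 * h ^ 2) * (γ j * γ k) := by ring
    _ ≤ ((g j - g k) ^ 2 * h ^ 2) * (C * (γ j + γ k) * w (j - k)) :=
        mul_le_mul_of_nonneg_left (hγ j k hjk) (by positivity)
    _ = _ := by ring

end NonlocalEnergy

theorem stmt1_general (h : ℝ) (hh : 0 < h) (γ : ℤ → ℝ) (w : ℤ → ℝ) (C_P : ℝ)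
    (hγpos : ∀ j, 0 < γ j)
    (hγsum : Summable γ)
    (hwsymm : ∀ j : ℤ, j ≠ 0 → w j = w (-j))
    (hassump : ∀ j k : ℤ, j ≠ k → γ j * γ k ≤ C_P * (γ j + γ k) * w (j - k))
    (g : ℤ → ℝ)
    (hg2 : Summable (fun j => g j ^ 2 * γ j * h))
    (hdouble : Summable (fun p : ℤ × ℤ =>
      if p.1 = p.2 then 0 else w (p.1 - p.2) * (g p.1 - g p.2) ^ 2 * γ p.2 * h ^ 2))
    (hmean : ∑' j : ℤ, g j * γ j * h = 0) :
    ∑' j : ℤ, g j ^ 2 * γ j * h ≤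
      C_P / (∑' j : ℤ, γ j * h) *
        ∑' p : ℤ × ℤ,
          (if p.1 = p.2 then 0 else w (p.1 - p.2) * (g p.1 - g p.2) ^ 2 * γ p.2 * h ^ 2) := by
  have hμ : ∀ j, 0 < γ j * h := fun j => mul_pos (hγpos j) hh
  have hμs : Summable fun j => γ j * h := hγsum.mul_right h
  have hvar := hasSum_sq_sub_mul_mul (fun j => (hμ j).le) hμs (by simpa only [mul_assoc] using hg2)
  have hE : HasSum (nonlocalEnergyTerm h γ w g) _ := hdouble.hasSum
  have hEswap := (Equiv.prodComm ℤ ℤ).hasSum_iff.mpr hE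
  have key := hasSum_le (sq_sub_mul_mul_le_nonlocalEnergyTerm_add_swap hwsymm hassump) hvar
    ((hE.add hEswap).mul_left C_P)
  simp only [← mul_assoc, hmean] at key
  rw [div_mul_eq_mul_div, le_div_iff₀ (hμs.tsum_pos (fun j => (hμ j).le) 0 (hμ 0))]
  linarith

/-- discrete nonlocal Poincaré inequality on the lattice `hℤ`. -/
theorem stmt1 (h : ℝ) (hh : 0 < h) (γ : ℤ → ℝ) (w : ℤ → ℝ) (C_P : ℝ) (hCP : 0 < C_P)
    (hγpos : ∀ j, 0 < γ j)
    (hγsum : Summable γ)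
    (hwnonneg : ∀ j, j ≠ 0 → 0 ≤ w j)
    (hwsymm : ∀ j : ℤ, j ≠ 0 → w j = w (-j))
    (hassump : ∀ j k : ℤ, j ≠ k → γ j * γ k ≤ C_P * (γ j + γ k) * w (j - k))
    (g : ℤ → ℝ)
    (hg2 : Summable (fun j => g j ^ 2 * γ j * h))
    (hgsum : Summable (fun j => g j * γ j * h))
    (hdouble : Summable (fun p : ℤ × ℤ =>
      if p.1 = p.2 then 0 else w (p.1 - p.2) * (g p.1 - g p.2) ^ 2 * γ p.2 * h ^ 2))
    (hmean : ∑' j : ℤ, g j * γ j * h = 0) :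
    ∑' j : ℤ, g j ^ 2 * γ j * h ≤
      C_P / (∑' j : ℤ, γ j * h) *
        ∑' p : ℤ × ℤ,
          (if p.1 = p.2 then 0 else w (p.1 - p.2) * (g p.1 - g p.2) ^ 2 * γ p.2 * h ^ 2) :=
  stmt1_general h hh γ w C_P hγpos hγsum hwsymm hassump g hg2 hdouble hmean
end

section
/- Let $\alpha\in(0,2)$, $h>0$, and define for $k\ge2$ even the coefficient $\beta_k^h := \frac{C_{1,\alpha}}{h^{1+\alpha}}\int_{-1}^1 (1-t^2)\,(k+t)^{-1-\alpha}\,dt$ and for $k\ge 3$ odd $\beta_k^h := \frac{C_{1,\alpha}}{2h^{1+\alpha}}\int_{-2}^2(t^2-3|t|+2)(k+t)^{-1-\alpha}\,dt$, where $C_{1,\alpha}=2^\alpha\Gamma((\alpha+1)/2)/(\pi^{1/2}|\Gamma(-\alpha/2)|)>0$. Then there exist constants $0<b_\alpha\le B_\alpha$ depending only on $\alpha$ such that $b_\alpha\,|hk|^{-1-\alpha}\le \beta_k^h\le B_\alpha\,|hk|^{-1-\alpha}$ for all $k\ge 2$. -/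
open intervalIntegral Real

/-- The constant `C_{1,α} = 2^α Γ((α+1)/2) / (√π |Γ(-α/2)|)`. -/
noncomputable def C1 (α : ℝ) : ℝ :=
  2 ^ α * Real.Gamma ((α + 1) / 2) / (Real.sqrt Real.pi * |Real.Gamma (-(α / 2))|)

/-- The Huang–Oberman coefficients `β_k^h` for `k ≥ 2`. -/
noncomputable def betaCoef (α h : ℝ) (k : ℤ) : ℝ :=
  if Even k then
    C1 α / h ^ (1 + α) * ∫ t in (-1 : ℝ)..1, (1 - t ^ 2) * ((k : ℝ) + t) ^ (-(1 + α))
  else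
    C1 α / (2 * h ^ (1 + α)) *
      ∫ t in (-2 : ℝ)..2, (t ^ 2 - 3 * |t| + 2) * ((k : ℝ) + t) ^ (-(1 + α))

/-!
Writing `β = 1 + α`, `β_k^h = C_{1,α} h^{-β} I_k`, where `I_k` averages `(k + t)^{-β}` against the
kernel `1 - t²` (`k` even) or `(|t| - 1)(|t| - 2)/2` (`k` odd). The upper bound
`I_k ≲ (k - 2)^{-β} ≲ k^{-β}` only needs the kernels to be bounded. For the lower bound one
compares `(k + t)^{-β}` with its values at the sign changes of the kernel: this gives
`I_k ≥ 4/3 (k + 1)^{-β}` for even `k` and `2 I_k ≥ 3/2 (k + 1)^{-β} - 1/6 (k - 2)^{-β}` for odd `k`,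
which is `≳ k^{-β}` for `k ≥ 5` since `k - 2 ≥ (k + 1)/2` and `β ≤ 3`. For `k = 3` one substitutes
`u = 3 + t`, splits `u^{-β} = u^{-3} u^{3-β}` and compares only the increasing factor `u^{3-β}`
with its values at the sign changes; the remaining integrals of rational functions leave the margin
`log 4 + 25/9 log (5/4) - 2 ≈ 0.006`, certified by rational bounds on `log 2`, `log 3`, `log 5`.
-/

open MeasureTheory Set

theorem log_lt_div_of_pow_lt_exp_one_pow {x : ℝ} (hx : 0 < x) {p q : ℕ} (hq : 0 < q)
    (h : x ^ q < exp 1 ^ p) : log x < p / q := by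
  rw [lt_div_iff₀ (by exact_mod_cast hq), mul_comm, ← log_pow]
  calc log (x ^ q) < log (exp 1 ^ p) := log_lt_log (by positivity) h
    _ = p := by rw [log_pow, log_exp, mul_one]

theorem div_lt_log_of_exp_one_pow_lt_pow {x : ℝ} {p q : ℕ} (hq : 0 < q)
    (h : exp 1 ^ p < x ^ q) : (p / q : ℝ) < log x := by
  rw [div_lt_iff₀ (by exact_mod_cast hq), mul_comm (log x), ← log_pow]
  calc (p : ℝ) = log (exp 1 ^ p) := by rw [log_pow, log_exp, mul_one]
    _ < log (x ^ q) := log_lt_log (by positivity) h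

theorem log_three_lt : log 3 < 10 / 9 := by
  have h : (3 : ℝ) ^ 9 < exp 1 ^ 10 :=
    calc (3 : ℝ) ^ 9 < 2.7182818283 ^ 10 := by norm_num
      _ < exp 1 ^ 10 := pow_lt_pow_left₀ exp_one_gt_d9 (by norm_num) (by norm_num)
  exact_mod_cast log_lt_div_of_pow_lt_exp_one_pow (by norm_num) (by norm_num) h

theorem log_five_lt : log 5 < 29 / 18 := by
  have h : (5 : ℝ) ^ 18 < exp 1 ^ 29 :=
    calc (5 : ℝ) ^ 18 < 2.7182818283 ^ 29 := by norm_num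
      _ < exp 1 ^ 29 := pow_lt_pow_left₀ exp_one_gt_d9 (by norm_num) (by norm_num)
  exact_mod_cast log_lt_div_of_pow_lt_exp_one_pow (by norm_num) (by norm_num) h

theorem lt_log_five : 37 / 23 < log 5 := by
  have h : exp 1 ^ 37 < (5 : ℝ) ^ 23 :=
    calc exp 1 ^ 37 < 2.7182818286 ^ 37 :=
          pow_lt_pow_left₀ exp_one_lt_d9 (exp_pos 1).le (by norm_num)
      _ < 5 ^ 23 := by norm_num
  exact_mod_cast div_lt_log_of_exp_one_pow_lt_pow (by norm_num) h

theorem log_four : log 4 = 2 * log 2 := by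
  rw [show (4 : ℝ) = 2 ^ 2 by norm_num, log_pow, Nat.cast_ofNat]

theorem C1_pos {α : ℝ} (hα0 : 0 < α) (hα2 : α < 2) : 0 < C1 α := by
  have hΓ : Gamma (-(α / 2)) ≠ 0 := by
    refine Gamma_ne_zero fun m hm => ?_
    rcases Nat.eq_zero_or_pos m with rfl | hm1
    · simp at hm; linarith
    · have : (1 : ℝ) ≤ m := by exact_mod_cast hm1
      linarith
  unfold C1
  have := Gamma_pos_of_pos (by linarith : 0 < (α + 1) / 2)
  have := sqrt_pos.mpr pi_pos
  positivity

theorem rpow_neg_le_mul_rpow_neg {x y m β : ℝ} (hx : 0 < x) (hm : 0 < m) (hβ : 0 ≤ β)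
    (h : x ≤ m * y) : y ^ (-β) ≤ m ^ β * x ^ (-β) := by
  have hy : 0 < y := pos_of_mul_pos_right (hx.trans_le h) hm.le
  calc y ^ (-β) = m ^ β * (m * y) ^ (-β) := by
        rw [mul_rpow hm.le hy.le, rpow_neg hm.le, ← mul_assoc, mul_inv_cancel₀ (by positivity),
          one_mul]
    _ ≤ m ^ β * x ^ (-β) :=
      mul_le_mul_of_nonneg_left (rpow_le_rpow_of_nonpos hx h (by linarith)) (by positivity)

theorem intervalIntegrable_mul_rpow {f g : ℝ → ℝ} (hf : Continuous f) (hg : Continuous g)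
    {e a b : ℝ} (hpos : ∀ t ∈ uIcc a b, 0 < g t) :
    IntervalIntegrable (fun t => f t * g t ^ e) volume a b :=
  (hf.continuousOn.mul (hg.continuousOn.rpow_const fun t ht => .inl (hpos t ht).ne'))
    |>.intervalIntegrable

theorem mul_integral_le_integral_mul_of_sign {f w : ℝ → ℝ} {a b c : ℝ} (hab : a ≤ b)
    (hf : IntervalIntegrable f volume a b)
    (hfw : IntervalIntegrable (fun t => f t * w t) volume a b)
    (hsign : ∀ t ∈ Icc a b, (f t ≤ 0 ∧ w t ≤ c) ∨ (0 ≤ f t ∧ c ≤ w t)) :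
    c * ∫ t in a..b, f t ≤ ∫ t in a..b, f t * w t := by
  rw [← intervalIntegral.integral_const_mul]
  refine integral_mono_on hab (hf.const_mul c) hfw fun t ht => ?_
  rcases hsign t ht with ⟨hf0, hwc⟩ | ⟨hf0, hcw⟩ <;> nlinarith

theorem integral_le_mul_of_abs_le {f w : ℝ → ℝ} {a b C c : ℝ} (hab : a ≤ b)
    (hf : ∀ t ∈ Icc a b, |f t| ≤ C) (hw : ∀ t ∈ Icc a b, 0 ≤ w t ∧ w t ≤ c) :
    ∫ t in a..b, f t * w t ≤ C * c * (b - a) := by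
  have hC : ∀ t ∈ uIoc a b, ‖f t * w t‖ ≤ C * c := fun t ht => by
    have ht' : t ∈ Icc a b := Ioc_subset_Icc_self (uIoc_of_le hab ▸ ht)
    obtain ⟨hw0, hwc⟩ := hw t ht'
    rw [Real.norm_eq_abs, abs_mul, abs_of_nonneg hw0]
    exact mul_le_mul (hf t ht') hwc hw0 ((abs_nonneg _).trans (hf t ht'))
  calc ∫ t in a..b, f t * w t ≤ ‖∫ t in a..b, f t * w t‖ := le_norm_self _
    _ ≤ C * c * |b - a| := norm_integral_le_of_norm_le_const hC
    _ = C * c * (b - a) := by rw [abs_of_nonneg (by linarith)]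

theorem integral_quadratic (p q a b : ℝ) :
    ∫ t in a..b, (t ^ 2 + p * t + q) =
      (b ^ 3 / 3 + p * b ^ 2 / 2 + q * b) - (a ^ 3 / 3 + p * a ^ 2 / 2 + q * a) := by
  refine integral_eq_sub_of_hasDerivAt (f := fun t => t ^ 3 / 3 + p * t ^ 2 / 2 + q * t)
    (fun x _ => ?_)
    ((by fun_prop : Continuous fun t : ℝ => t ^ 2 + p * t + q).intervalIntegrable _ _)
  convert (((hasDerivAt_pow 3 x).div_const 3).add
    (((hasDerivAt_pow 2 x).const_mul p).div_const 2)).add ((hasDerivAt_id x).const_mul q) using 1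
  · ext t; simp only [Pi.add_apply, id]
  · push_cast; ring

theorem integral_quadratic_mul_rpow_neg_three (p q : ℝ) {a b : ℝ} (ha : 0 < a) (hab : a ≤ b) :
    ∫ u in a..b, (u ^ 2 + p * u + q) * u ^ (-3 : ℝ) =
      (log b - p / b - q / (2 * b ^ 2)) - (log a - p / a - q / (2 * a ^ 2)) := by
  have hpos : ∀ u ∈ uIcc a b, 0 < u := fun u hu => ha.trans_le (uIcc_of_le hab ▸ hu).1
  refine integral_eq_sub_of_hasDerivAt (f := fun u => log u - p / u - q / (2 * u ^ 2))
    (fun x hx => ?_) (intervalIntegrable_mul_rpow (g := fun u => u)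
      (f := fun u => u ^ 2 + p * u + q) (by fun_prop) continuous_id hpos)
  have hx0 := (hpos x hx).ne'
  convert ((hasDerivAt_log hx0).sub ((hasDerivAt_inv hx0).const_mul p)).sub
    ((((hasDerivAt_pow 2 x).const_mul 2).inv (by positivity)).const_mul q) using 1
  · ext u; simp [div_eq_mul_inv]
  · rw [rpow_neg (hpos x hx).le, show (3 : ℝ) = (3 : ℕ) by norm_num, rpow_natCast]
    field_simp
    ring

theorem mul_integral_le_integral_mul_rpow {p : ℝ → ℝ} (hp : Continuous p) {a b c e γ : ℝ}
    (ha : 0 < a) (hab : a ≤ b) (hc : 0 ≤ c) (hγ : 0 ≤ γ)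
    (hsign : ∀ u ∈ Icc a b, (p u ≤ 0 ∧ u ≤ c) ∨ (0 ≤ p u ∧ c ≤ u)) :
    c ^ γ * ∫ u in a..b, p u * u ^ e ≤ ∫ u in a..b, p u * u ^ (e + γ) := by
  have hpos : ∀ u ∈ uIcc a b, 0 < u := fun u hu => ha.trans_le (uIcc_of_le hab ▸ hu).1
  have hsplit : ∫ u in a..b, p u * u ^ (e + γ) = ∫ u in a..b, p u * u ^ e * u ^ γ :=
    integral_congr fun u hu => by rw [rpow_add (hpos u hu), mul_assoc]
  rw [hsplit]
  refine mul_integral_le_integral_mul_of_sign hab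
    (intervalIntegrable_mul_rpow (g := fun u => u) hp continuous_id hpos) ?_ fun u hu => ?_
  · exact (intervalIntegrable_mul_rpow (g := fun u => u) hp continuous_id hpos).mul_continuousOn
      (continuous_rpow_const hγ).continuousOn
  · have hu0 : 0 ≤ u := (ha.trans_le hu.1).le
    rcases hsign u hu with ⟨hpu, huc⟩ | ⟨hpu, hcu⟩
    · exact .inl ⟨mul_nonpos_of_nonpos_of_nonneg hpu (by positivity),
        rpow_le_rpow hu0 huc hγ⟩
    · exact .inr ⟨mul_nonneg hpu (by positivity), rpow_le_rpow hc hcu hγ⟩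

noncomputable def evenIntegral (β K : ℝ) : ℝ :=
  ∫ t in (-1 : ℝ)..1, (1 - t ^ 2) * (K + t) ^ (-β)

def oddKernel (t : ℝ) : ℝ := t ^ 2 - 3 * |t| + 2

noncomputable def oddIntegral (β K : ℝ) : ℝ :=
  ∫ t in (-2 : ℝ)..2, oddKernel t * (K + t) ^ (-β)

theorem continuous_oddKernel : Continuous oddKernel := by
  unfold oddKernel; fun_prop

theorem oddKernel_of_nonpos {t : ℝ} (ht : t ≤ 0) : oddKernel t = t ^ 2 + 3 * t + 2 := by
  rw [oddKernel, abs_of_nonpos ht]; ring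

theorem oddKernel_of_nonneg {t : ℝ} (ht : 0 ≤ t) : oddKernel t = t ^ 2 + -3 * t + 2 := by
  rw [oddKernel, abs_of_nonneg ht]; ring

theorem oddKernel_eq_abs (t : ℝ) : oddKernel t = (|t| - 1) * (|t| - 2) := by
  rw [oddKernel, ← sq_abs]; ring

theorem abs_oddKernel_le {t : ℝ} (ht : |t| ≤ 2) : |oddKernel t| ≤ 2 := by
  rw [oddKernel_eq_abs, abs_le]
  constructor <;> nlinarith [abs_nonneg t]

theorem integral_oddKernel_neg_two_neg_one : ∫ t in (-2 : ℝ)..(-1), oddKernel t = -1 / 6 := by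
  rw [integral_congr fun t ht => oddKernel_of_nonpos (by
    rw [uIcc_of_le (by norm_num)] at ht; linarith [ht.2]), integral_quadratic]
  norm_num

theorem integral_oddKernel_neg_one_two : ∫ t in (-1 : ℝ)..2, oddKernel t = 3 / 2 := by
  have hint : ∀ a b : ℝ, IntervalIntegrable oddKernel volume a b :=
    continuous_oddKernel.intervalIntegrable
  rw [← integral_add_adjacent_intervals (hint (-1) 0) (hint 0 2),
    integral_congr (a := -1) (b := 0) fun t ht => oddKernel_of_nonpos (by
      rw [uIcc_of_le (by norm_num)] at ht; exact ht.2),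
    integral_congr (a := 0) (b := 2) fun t ht => oddKernel_of_nonneg (by
      rw [uIcc_of_le (by norm_num)] at ht; exact ht.1),
    integral_quadratic, integral_quadratic]
  norm_num

section

variable {β K : ℝ}

theorem evenIntegral_ge (hβ : 0 ≤ β) (hK : 1 < K) :
    4 / 3 * (K + 1) ^ (-β) ≤ evenIntegral β K := by
  have hmass : ∫ t in (-1 : ℝ)..1, (1 - t ^ 2) = 4 / 3 := by
    norm_num [intervalIntegral.integral_sub, integral_pow]
  have := mul_integral_le_integral_mul_of_sign (a := -1) (b := 1) (c := (K + 1) ^ (-β))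
    (by norm_num) ((by fun_prop : Continuous fun t : ℝ => 1 - t ^ 2).intervalIntegrable _ _)
    (intervalIntegrable_mul_rpow (g := fun t => K + t) (by fun_prop) (by fun_prop) fun t ht => by
      rw [uIcc_of_le (by norm_num)] at ht; linarith [ht.1])
    fun t ht => .inr ⟨by nlinarith [ht.1, ht.2],
      rpow_le_rpow_of_nonpos (by linarith [ht.1]) (by linarith [ht.2]) (by linarith)⟩
  rwa [hmass, mul_comm] at this

theorem evenIntegral_le (hβ : 0 ≤ β) (hK : 1 < K) :
    evenIntegral β K ≤ 2 * (K - 1) ^ (-β) := by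
  have := integral_le_mul_of_abs_le (f := fun t => 1 - t ^ 2) (w := fun t => (K + t) ^ (-β))
    (C := 1) (c := (K - 1) ^ (-β)) (by norm_num : (-1 : ℝ) ≤ 1)
    (fun t ht => abs_le.mpr ⟨by nlinarith [ht.1, ht.2], by nlinarith⟩)
    (fun t ht => ⟨(rpow_pos_of_pos (by linarith [ht.1]) _).le,
      rpow_le_rpow_of_nonpos (by linarith) (by linarith [ht.1]) (by linarith)⟩)
  rw [evenIntegral]
  linarith

theorem oddIntegral_le (hβ : 0 ≤ β) (hK : 2 < K) :
    oddIntegral β K ≤ 8 * (K - 2) ^ (-β) := by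
  have := integral_le_mul_of_abs_le (f := oddKernel) (w := fun t => (K + t) ^ (-β))
    (C := 2) (c := (K - 2) ^ (-β)) (by norm_num : (-2 : ℝ) ≤ 2)
    (fun t ht => abs_oddKernel_le (abs_le.mpr ht))
    (fun t ht => ⟨(rpow_pos_of_pos (by linarith [ht.1]) _).le,
      rpow_le_rpow_of_nonpos (by linarith) (by linarith [ht.1]) (by linarith)⟩)
  rw [oddIntegral]
  linarith

theorem oddIntegral_ge (hβ : 0 ≤ β) (hK : 2 < K) :
    3 / 2 * (K + 1) ^ (-β) - 1 / 6 * (K - 2) ^ (-β) ≤ oddIntegral β K := by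
  have hint : ∀ a b : ℝ, -2 ≤ a → a ≤ b →
      IntervalIntegrable (fun t => oddKernel t * (K + t) ^ (-β)) volume a b :=
    fun a b ha hab => intervalIntegrable_mul_rpow (g := fun t => K + t) continuous_oddKernel
      (by fun_prop) fun t ht => by rw [uIcc_of_le hab] at ht; linarith [ht.1]
  have hkernel : ∀ a b : ℝ, IntervalIntegrable oddKernel volume a b :=
    continuous_oddKernel.intervalIntegrable
  have hleft := mul_integral_le_integral_mul_of_sign (c := (K - 2) ^ (-β)) (by norm_num)
    (hkernel (-2) (-1)) (hint (-2) (-1) le_rfl (by norm_num)) fun t ht => .inl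
      ⟨by rw [oddKernel_of_nonpos (by linarith [ht.2])]; nlinarith [ht.1, ht.2],
        rpow_le_rpow_of_nonpos (by linarith) (by linarith [ht.1]) (by linarith)⟩
  have hright := mul_integral_le_integral_mul_of_sign (c := (K + 1) ^ (-β)) (by norm_num)
    (hkernel (-1) 2) (hint (-1) 2 (by norm_num) (by norm_num)) fun t ht => by
      have hKt : 0 < K + t := by linarith [ht.1]
      rcases le_total t 1 with h1 | h1
      · refine .inr ⟨?_, rpow_le_rpow_of_nonpos hKt (by linarith) (by linarith)⟩
        rw [oddKernel_eq_abs]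
        nlinarith [abs_le.mpr ⟨ht.1, h1⟩, abs_nonneg t]
      · refine .inl ⟨?_, rpow_le_rpow_of_nonpos (by linarith) (by linarith) (by linarith)⟩
        rw [oddKernel_of_nonneg (by linarith)]
        nlinarith [ht.2]
  rw [integral_oddKernel_neg_two_neg_one] at hleft
  rw [integral_oddKernel_neg_one_two] at hright
  rw [oddIntegral, ← integral_add_adjacent_intervals (hint (-2) (-1) le_rfl (by norm_num))
    (hint (-1) 2 (by norm_num) (by norm_num))]
  linarith

end

theorem oddIntegral_three_eq (β : ℝ) :
    oddIntegral β 3 = (∫ u in (1 : ℝ)..3, (u ^ 2 + -3 * u + 2) * u ^ (-β)) +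
      ∫ u in (3 : ℝ)..5, (u ^ 2 + -9 * u + 20) * u ^ (-β) := by
  have hint : ∀ a b : ℝ, -2 ≤ a → a ≤ b →
      IntervalIntegrable (fun t => oddKernel t * (3 + t) ^ (-β)) volume a b :=
    fun a b ha hab => intervalIntegrable_mul_rpow (g := fun t => 3 + t) continuous_oddKernel
      (by fun_prop) fun t ht => by rw [uIcc_of_le hab] at ht; linarith [ht.1]
  rw [oddIntegral, ← integral_add_adjacent_intervals (hint (-2) 0 le_rfl (by norm_num))
    (hint 0 2 (by norm_num) (by norm_num))]
  congr 1
  · rw [integral_congr (g := fun t => ((3 + t) ^ 2 + -3 * (3 + t) + 2) * (3 + t) ^ (-β))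
      fun t ht => ?_, integral_comp_add_left (fun u => (u ^ 2 + -3 * u + 2) * u ^ (-β))]
    · norm_num
    · rw [uIcc_of_le (by norm_num)] at ht
      simp only [oddKernel_of_nonpos ht.2]
      ring
  · rw [integral_congr (g := fun t => ((3 + t) ^ 2 + -9 * (3 + t) + 20) * (3 + t) ^ (-β))
      fun t ht => ?_, integral_comp_add_left (fun u => (u ^ 2 + -9 * u + 20) * u ^ (-β))]
    · norm_num
    · rw [uIcc_of_le (by norm_num)] at ht
      simp only [oddKernel_of_nonneg ht.1]
      ring

theorem oddIntegral_three_ge {β : ℝ} (hβ1 : 1 ≤ β) (hβ3 : β ≤ 3) :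
    3 ^ (-β) / 48 ≤ oddIntegral β 3 := by
  have hγ : 0 ≤ 3 - β := by linarith
  have hexp : (-3 : ℝ) + (3 - β) = -β := by ring
  have h13 := mul_integral_le_integral_mul_rpow (p := fun u => u ^ 2 + -3 * u + 2) (e := -3)
    (by fun_prop) (a := 1) (b := 3) (c := 2) (by norm_num) (by norm_num) (by norm_num) hγ
    fun u hu => (le_total u 2).imp (fun h => ⟨by nlinarith [hu.1], h⟩)
      (fun h => ⟨by nlinarith [hu.2], h⟩)
  have h34 := mul_integral_le_integral_mul_rpow (p := fun u => u ^ 2 + -9 * u + 20) (e := -3)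
    (by fun_prop) (a := 3) (b := 4) (c := 3) (by norm_num) (by norm_num) (by norm_num) hγ
    fun u hu => .inr ⟨by nlinarith [hu.1, hu.2], hu.1⟩
  have h45 := mul_integral_le_integral_mul_rpow (p := fun u => u ^ 2 + -9 * u + 20) (e := -3)
    (by fun_prop) (a := 4) (b := 5) (c := 5) (by norm_num) (by norm_num) (by norm_num) hγ
    fun u hu => .inl ⟨by nlinarith [hu.1, hu.2], hu.2⟩
  rw [integral_quadratic_mul_rpow_neg_three _ _ (by norm_num) (by norm_num), hexp] at h13 h34 h45
  rw [log_one] at h13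
  rw [log_four] at h34 h45
  have hA : log 3 - 10 / 9 ≤ 0 := by linarith [log_three_lt]
  have hC : log 5 - 2 * log 2 - 9 / 40 ≤ 0 := by linarith [log_five_lt, log_two_gt_d9]
  have hM : 1 / 1296 ≤ 2 * log 2 + 25 / 9 * (log 5 - 2 * log 2) - 2 := by
    linarith [lt_log_five, log_two_lt_d9]
  have h23 : (2 : ℝ) ^ (3 - β) ≤ 3 ^ (3 - β) := rpow_le_rpow (by norm_num) (by norm_num) hγ
  have h53 : (5 : ℝ) ^ (3 - β) ≤ 25 / 9 * 3 ^ (3 - β) := by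
    rw [show (5 : ℝ) = 5 / 3 * 3 by norm_num, mul_rpow (by norm_num) (by norm_num)]
    gcongr
    calc (5 / 3 : ℝ) ^ (3 - β) ≤ (5 / 3) ^ (2 : ℝ) :=
          rpow_le_rpow_of_exponent_le (by norm_num) (by linarith)
      _ = 25 / 9 := by norm_num
  have h3 : (3 : ℝ) ^ (3 - β) = 27 * 3 ^ (-β) := by
    rw [sub_eq_add_neg, rpow_add (by norm_num)]; norm_num
  have h3pos : (0 : ℝ) < 3 ^ (3 - β) := by positivity
  have hint : ∀ a b : ℝ, 0 < a → a ≤ b →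
      IntervalIntegrable (fun u => (u ^ 2 + -9 * u + 20) * u ^ (-β)) volume a b :=
    fun a b ha hab => intervalIntegrable_mul_rpow (g := fun u => u) (by fun_prop) continuous_id
      fun u hu => by rw [uIcc_of_le hab] at hu; linarith [hu.1]
  rw [oddIntegral_three_eq, ← integral_add_adjacent_intervals
    (hint 3 4 (by norm_num) (by norm_num)) (hint 4 5 (by norm_num) (by norm_num))]
  linarith [mul_le_mul_of_nonpos_right h23 hA, mul_le_mul_of_nonpos_right h53 hC,
    mul_le_mul_of_nonneg_left hM h3pos.le]

noncomputable def betaKernel (β : ℝ) (k : ℤ) : ℝ :=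
  if Even k then evenIntegral β k else oddIntegral β k / 2

theorem betaCoef_eq (α : ℝ) {h : ℝ} (hh : 0 < h) (k : ℤ) :
    betaCoef α h k = C1 α * h ^ (-(1 + α)) * betaKernel (1 + α) k := by
  rw [betaCoef, betaKernel, rpow_neg hh.le]
  split_ifs
  · rw [evenIntegral]; ring
  · unfold oddIntegral oddKernel; ring

section

variable {β : ℝ} {k : ℤ}

theorem eq_three_or_five_le_of_not_even (hk : 2 ≤ k) (heven : ¬Even k) : k = 3 ∨ 5 ≤ k := by
  obtain ⟨m, rfl⟩ := Int.not_even_iff_odd.mp heven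
  omega

theorem betaKernel_le (hβ0 : 0 ≤ β) (hβ3 : β ≤ 3) (hk : 2 ≤ k) :
    betaKernel β k ≤ 108 * (k : ℝ) ^ (-β) := by
  have hK : (2 : ℝ) ≤ k := by exact_mod_cast hk
  have hkpos : 0 < (k : ℝ) ^ (-β) := by positivity
  rw [betaKernel]
  split_ifs with heven
  · have h2 : (2 : ℝ) ^ β ≤ 8 :=
      (rpow_le_rpow_of_exponent_le (by norm_num) hβ3).trans_eq (by norm_num)
    have hshift := rpow_neg_le_mul_rpow_neg (x := k) (y := k - 1) (m := 2) (by linarith)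
      (by norm_num) hβ0 (by linarith)
    nlinarith [evenIntegral_le hβ0 (K := k) (by linarith)]
  · have hK3 : (3 : ℝ) ≤ k := by
      have := eq_three_or_five_le_of_not_even hk heven
      exact_mod_cast (by omega : (3 : ℤ) ≤ k)
    have h3 : (3 : ℝ) ^ β ≤ 27 :=
      (rpow_le_rpow_of_exponent_le (by norm_num) hβ3).trans_eq (by norm_num)
    have hshift := rpow_neg_le_mul_rpow_neg (x := k) (y := k - 2) (m := 3) (by linarith)
      (by norm_num) hβ0 (by linarith)
    nlinarith [oddIntegral_le hβ0 (K := k) (by linarith)]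

theorem le_betaKernel (hβ1 : 1 ≤ β) (hβ3 : β ≤ 3) (hk : 2 ≤ k) :
    (k : ℝ) ^ (-β) / 96 ≤ betaKernel β k := by
  have hβ0 : 0 ≤ β := by linarith
  have hK : (2 : ℝ) ≤ k := by exact_mod_cast hk
  have h2 : (2 : ℝ) ^ β ≤ 8 :=
    (rpow_le_rpow_of_exponent_le (by norm_num) hβ3).trans_eq (by norm_num)
  have hnext : (k : ℝ) ^ (-β) ≤ 8 * ((k : ℝ) + 1) ^ (-β) := by
    have := rpow_neg_le_mul_rpow_neg (x := k + 1) (y := k) (m := 2) (by linarith)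
      (by norm_num) hβ0 (by linarith)
    nlinarith [rpow_pos_of_pos (by linarith : (0 : ℝ) < k + 1) (-β)]
  rw [betaKernel]
  split_ifs with heven
  · nlinarith [evenIntegral_ge hβ0 (K := k) (by linarith),
      rpow_pos_of_pos (by linarith : (0 : ℝ) < k) (-β)]
  rcases eq_three_or_five_le_of_not_even hk heven with rfl | hk5
  · norm_num
    linarith [oddIntegral_three_ge hβ1 hβ3]
  · have hK5 : (5 : ℝ) ≤ k := by exact_mod_cast hk5
    have hprev := rpow_neg_le_mul_rpow_neg (x := k + 1) (y := k - 2) (m := 2) (by linarith)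
      (by norm_num) hβ0 (by linarith)
    nlinarith [oddIntegral_ge hβ0 (K := k) (by linarith),
      rpow_pos_of_pos (by linarith : (0 : ℝ) < k + 1) (-β)]

end

/-- two-sided bounds `b_α |hk|^{-1-α} ≤ β_k^h ≤ B_α |hk|^{-1-α}` for `k ≥ 2`,
with constants depending only on `α`. -/
theorem stmt9 (α : ℝ) (hα0 : 0 < α) (hα2 : α < 2) :
    ∃ b B : ℝ, 0 < b ∧ b ≤ B ∧ ∀ h : ℝ, 0 < h → ∀ k : ℤ, 2 ≤ k →
      b * |h * (k : ℝ)| ^ (-(1 + α)) ≤ betaCoef α h k ∧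
        betaCoef α h k ≤ B * |h * (k : ℝ)| ^ (-(1 + α)) := by
  have hC := C1_pos hα0 hα2
  refine ⟨C1 α / 96, 108 * C1 α, by positivity, by linarith, fun h hh k hk => ?_⟩
  have hk0 : (0 : ℝ) < k := by
    have : (2 : ℝ) ≤ k := by exact_mod_cast hk
    linarith
  have hfactor : 0 ≤ C1 α * h ^ (-(1 + α)) := by positivity
  rw [betaCoef_eq α hh, abs_of_pos (mul_pos hh hk0), mul_rpow hh.le hk0.le]
  constructor
  · calc C1 α / 96 * (h ^ (-(1 + α)) * (k : ℝ) ^ (-(1 + α)))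
        = C1 α * h ^ (-(1 + α)) * ((k : ℝ) ^ (-(1 + α)) / 96) := by ring
      _ ≤ _ := mul_le_mul_of_nonneg_left (le_betaKernel (by linarith) (by linarith) hk) hfactor
  · calc C1 α * h ^ (-(1 + α)) * betaKernel (1 + α) k
        ≤ C1 α * h ^ (-(1 + α)) * (108 * (k : ℝ) ^ (-(1 + α))) :=
          mul_le_mul_of_nonneg_left (betaKernel_le (by linarith) (by linarith) hk) hfactor
      _ = _ := by ring
end

section
/- Let $N\ge1$ be an odd integer. For any real sequence $(\beta_i)_{i\in\mathbb{Z}/N\mathbb{Z}}$ with $\sum_{i\in\mathbb{Z}/N\mathbb{Z}}\beta_i=0$, one has $\sum_{i\in\mathbb{Z}/N\mathbb{Z}}\beta_i^2 \le C\sum_{i\in\mathbb{Z}/N\mathbb{Z}}\Big(\frac{\beta_{i+1}-\beta_{i-1}}{2\Delta x}\Big)^2$, where $\Delta x = 1/N$ and $C$ is a universal constant independent of $N$. -/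
open scoped BigOperators

open Finset in
private lemma stmt16_key (N : ℕ) [NeZero N] (hN : Odd N) (β : ZMod N → ℝ) (i j : ZMod N) :
    (β j - β i) ^ 2 ≤ N * ∑ k : ZMod N, (β (k + 2) - β k) ^ 2 := by
  classical
  obtain ⟨m, hmN, hm⟩ : ∃ m : ℕ, m ≤ N ∧ j = i + 2 * m := by
    have hu : IsUnit (2 : ZMod N) := by
      have := (ZMod.isUnit_iff_coprime 2 N).mpr hN.coprime_two_left
      exact_mod_cast this
    obtain ⟨u, hu2⟩ := hu
    refine ⟨(((u⁻¹ : (ZMod N)ˣ) : ZMod N) * (j - i)).val, (ZMod.val_lt _).le, ?_⟩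
    have h2 : (2 : ZMod N) * ((((u⁻¹ : (ZMod N)ˣ) : ZMod N)) * (j - i)) = j - i := by
      rw [← mul_assoc, ← hu2, ← Units.val_mul, mul_inv_cancel, Units.val_one, one_mul]
    rw [ZMod.natCast_val, ZMod.cast_id, h2]
    ring
  subst hm
  -- telescoping
  have htel : ∀ m : ℕ, β (i + 2 * m) - β i
      = ∑ t ∈ range m, (β (i + 2 * t + 2) - β (i + 2 * t)) := by
    intro m
    induction m with
    | zero => simp
    | succ m ih =>
        rw [sum_range_succ, ← ih]
        have : i + 2 * ((m : ZMod N) + 1) = i + 2 * m + 2 := by ring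
        push_cast
        rw [this]
        ring
  rw [htel]
  have h1 : (∑ t ∈ range m, (β (i + 2 * t + 2) - β (i + 2 * t))) ^ 2
      ≤ m * ∑ t ∈ range m, (β (i + 2 * t + 2) - β (i + 2 * t)) ^ 2 := by
    have := sq_sum_le_card_mul_sum_sq (s := range m)
      (f := fun t => β (i + 2 * t + 2) - β (i + 2 * t))
    simpa using this
  have hinj : Set.InjOn (fun t : ℕ => i + 2 * (t : ZMod N)) (range m) := by
    intro a ha b hb hab
    have ha' : a < N := lt_of_lt_of_le (mem_range.mp ha) hmN
    have hb' : b < N := lt_of_lt_of_le (mem_range.mp hb) hmN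
    have hu : IsUnit (2 : ZMod N) := by
      have := (ZMod.isUnit_iff_coprime 2 N).mpr hN.coprime_two_left
      exact_mod_cast this
    have h2 : (2 : ZMod N) * a = 2 * b := by
      have := hab
      simp only at this
      linear_combination this
    have hcast : (a : ZMod N) = (b : ZMod N) := hu.mul_left_cancel h2
    have := congrArg ZMod.val hcast
    rwa [ZMod.val_cast_of_lt ha', ZMod.val_cast_of_lt hb'] at this
  have h2 : ∑ t ∈ range m, (β (i + 2 * t + 2) - β (i + 2 * t)) ^ 2
      ≤ ∑ k : ZMod N, (β (k + 2) - β k) ^ 2 := by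
    have hre : ∑ t ∈ range m, (β (i + 2 * t + 2) - β (i + 2 * t)) ^ 2
        = ∑ k ∈ (range m).image (fun t : ℕ => i + 2 * (t : ZMod N)),
            (β (k + 2) - β k) ^ 2 := by
      rw [Finset.sum_image (fun a ha b hb => hinj ha hb)]
    rw [hre]
    exact Finset.sum_le_sum_of_subset_of_nonneg (subset_univ _)
      (fun k _ _ => sq_nonneg _)
  calc (∑ t ∈ range m, (β (i + 2 * t + 2) - β (i + 2 * t))) ^ 2
      ≤ m * ∑ t ∈ range m, (β (i + 2 * t + 2) - β (i + 2 * t)) ^ 2 := h1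
    _ ≤ N * ∑ k : ZMod N, (β (k + 2) - β k) ^ 2 := by
        apply mul_le_mul (by exact_mod_cast hmN) h2
          (Finset.sum_nonneg fun _ _ => sq_nonneg _) (by positivity)

/-- discrete Poincaré inequality with centered differences on the periodic
lattice `ℤ/Nℤ`, `N` odd, with a universal constant independent of `N`. Here `Δx = 1/N`. -/
theorem stmt16 :
    ∃ C > 0, ∀ (N : ℕ) [NeZero N], Odd N → ∀ β : ZMod N → ℝ,
      (∑ i : ZMod N, β i) = 0 →
      ∑ i : ZMod N, (β i) ^ 2 ≤
        C * ∑ i : ZMod N, ((β (i + 1) - β (i - 1)) / (2 * (1 / (N : ℝ)))) ^ 2 := by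
  classical
  refine ⟨4, by norm_num, ?_⟩
  intro N _ hN β hsum
  set S := ∑ k : ZMod N, (β (k + 2) - β k) ^ 2 with hS
  have hS0 : 0 ≤ S := Finset.sum_nonneg fun _ _ => sq_nonneg _
  have hNpos : (0 : ℝ) < N := by
    exact_mod_cast Nat.pos_of_ne_zero (NeZero.ne N)
  have hcard : (Finset.univ : Finset (ZMod N)).card = N := by
    simpa using ZMod.card N
  -- pointwise bound
  have hpt : ∀ j, β j ^ 2 ≤ N * S := by
    intro j
    have h1 : (N : ℝ) * β j = ∑ i : ZMod N, (β j - β i) := by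
      rw [Finset.sum_sub_distrib, hsum, sub_zero, Finset.sum_const, hcard,
        nsmul_eq_mul]
    have h2 : ((N : ℝ) * β j) ^ 2 ≤ N * ∑ i : ZMod N, (β j - β i) ^ 2 := by
      rw [h1]
      have := sq_sum_le_card_mul_sum_sq (s := (Finset.univ : Finset (ZMod N)))
        (f := fun i => β j - β i)
      simpa [hcard] using this
    have h3 : ∑ i : ZMod N, (β j - β i) ^ 2 ≤ (N : ℝ) * ((N : ℝ) * S) := by
      calc ∑ i : ZMod N, (β j - β i) ^ 2
          ≤ ∑ _i : ZMod N, (N : ℝ) * S :=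
            Finset.sum_le_sum fun i _ => stmt16_key N hN β i j
        _ = (N : ℝ) * ((N : ℝ) * S) := by
            rw [Finset.sum_const, hcard, nsmul_eq_mul]
    have h4 : (N : ℝ) ^ 2 * β j ^ 2 ≤ (N : ℝ) ^ 2 * ((N : ℝ) * S) := by
      calc (N : ℝ) ^ 2 * β j ^ 2 = ((N : ℝ) * β j) ^ 2 := by ring
        _ ≤ N * ∑ i : ZMod N, (β j - β i) ^ 2 := h2
        _ ≤ (N : ℝ) * ((N : ℝ) * ((N : ℝ) * S)) :=
            mul_le_mul_of_nonneg_left h3 hNpos.le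
        _ = (N : ℝ) ^ 2 * ((N : ℝ) * S) := by ring
    exact le_of_mul_le_mul_left h4 (by positivity)
  have hsumβ : ∑ i : ZMod N, (β i) ^ 2 ≤ (N : ℝ) ^ 2 * S := by
    calc ∑ i : ZMod N, (β i) ^ 2 ≤ ∑ _i : ZMod N, (N : ℝ) * S :=
          Finset.sum_le_sum fun i _ => hpt i
      _ = (N : ℝ) ^ 2 * S := by
          rw [Finset.sum_const, hcard, nsmul_eq_mul]; ring
  -- rewrite RHS
  have hshift : ∑ i : ZMod N, (β (i + 1) - β (i - 1)) ^ 2 = S := by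
    rw [hS]
    refine (Fintype.sum_equiv (Equiv.addRight (1 : ZMod N))
      (fun k => (β (k + 2) - β k) ^ 2)
      (fun i => (β (i + 1) - β (i - 1)) ^ 2) ?_).symm
    intro k
    have e1 : k + 1 + 1 = k + 2 := by ring
    have e2 : k + 1 - 1 = k := by ring
    simp only [Equiv.coe_addRight, e1, e2]
  have hterm : ∀ x : ℝ, (x / (2 * (1 / (N : ℝ)))) ^ 2 = (N : ℝ) ^ 2 / 4 * x ^ 2 := by
    intro x
    field_simp
    ring
  have hRHS : (4 : ℝ) * ∑ i : ZMod N, ((β (i + 1) - β (i - 1)) / (2 * (1 / (N : ℝ)))) ^ 2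
      = (N : ℝ) ^ 2 * S := by
    calc (4 : ℝ) * ∑ i : ZMod N, ((β (i + 1) - β (i - 1)) / (2 * (1 / (N : ℝ)))) ^ 2
        = 4 * ∑ i : ZMod N, (N : ℝ) ^ 2 / 4 * (β (i + 1) - β (i - 1)) ^ 2 := by
          rw [Finset.sum_congr rfl fun i _ => hterm _]
      _ = (N : ℝ) ^ 2 * ∑ i : ZMod N, (β (i + 1) - β (i - 1)) ^ 2 := by
          rw [← Finset.mul_sum]; ring
      _ = (N : ℝ) ^ 2 * S := by rw [hshift]
  rw [hRHS]
  exact hsumβ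
end

section
/- Let $h>0$, $\alpha\in(0,2)$, and let $\mu_\alpha$ be the 1D symmetric stable density with $\mu_\alpha(v)\sim \langle v\rangle^{-1-\alpha}$. Set $M_j=\mu_\alpha(jh)$ and let $\beta_k^h$ satisfy $b_\alpha|hk|^{-1-\alpha}\le\beta_k^h\le B_\alpha|hk|^{-1-\alpha}$. Then the double sum $\widetilde S := \sum_{k\in\mathbb{Z}}\sum_{\ell\in\mathbb{Z}^*}\beta_\ell^h\,|2M_k-M_{k+\ell}-M_{k-\ell}|\,h^2$ is bounded by a constant depending only on $\alpha$ (uniformly in $h\le 1$), and consequently $\sum_{k\in\mathbb{Z}}\sum_{\ell\in\mathbb{Z}^*}\beta_\ell^h(2M_k-M_{k+\ell}-M_{k-\ell})h^2=0$. -/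
open Real

/-- Japanese bracket `⟨x⟩ = (1+x²)^{1/2}`. -/
noncomputable def jbr (x : ℝ) : ℝ := Real.sqrt (1 + x ^ 2)

/-!
Fix `ℓ` and put `ν k = μ (k h)`. The inner sum `∑ₖ |2 ν k - ν (k + ℓ) - ν (k - ℓ)|` is at most
`K · min (|hℓ|², 1) · ∑ₖ ⟨kh⟩^{-1-α}`: for `|hℓ| ≤ 1` by Taylor's formula and the decay of `μ''`
(moved from `x + t` to `x` at the cost of a factor `2^{3+α}`), otherwise by the triangle inequality
and the translation invariance of sums over `ℤ`. Both `∑ₖ ⟨kh⟩^{-1-α}` and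
`∑_{ℓ ≠ 0} min (|hℓ|², 1) |hℓ|^{-1-α}` are Riemann sums of integrable antitone majorants on
`(0, ∞)`, hence `O(1/h)`. With `β_ℓ ≤ B |hℓ|^{-1-α}` the factor `h²` absorbs both factors `1/h`.
The double sum is therefore absolutely summable, and by Fubini the signed sum is the sum over `ℓ`
of the inner signed sums, each of which vanishes by translation invariance.
-/

open Set MeasureTheory

section JapaneseBracket

lemma one_le_jbr (x : ℝ) : 1 ≤ jbr x :=
  Real.one_le_sqrt.mpr (by nlinarith)

lemma jbr_pos (x : ℝ) : 0 < jbr x := one_pos.trans_le (one_le_jbr x)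

lemma abs_le_jbr (x : ℝ) : |x| ≤ jbr x :=
  Real.abs_le_sqrt (by linarith)

lemma jbr_le_two_mul_jbr_add {x t : ℝ} (ht : |t| ≤ 1) : jbr x ≤ 2 * jbr (x + t) := by
  have ht2 : t ^ 2 ≤ 1 := by nlinarith [sq_abs t, abs_nonneg t]
  calc jbr x ≤ √(2 ^ 2 * (1 + (x + t) ^ 2)) :=
        Real.sqrt_le_sqrt (by nlinarith [sq_nonneg (x + 2 * t)])
    _ = 2 * jbr (x + t) := by rw [Real.sqrt_mul (by positivity), Real.sqrt_sq zero_le_two, jbr]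

variable {x s : ℝ}

lemma jbr_add_rpow_neg_le {t : ℝ} (ht : |t| ≤ 1) (hs : 0 ≤ s) :
    jbr (x + t) ^ (-s) ≤ 2 ^ s * jbr x ^ (-s) :=
  calc jbr (x + t) ^ (-s) ≤ (jbr x / 2) ^ (-s) :=
        Real.rpow_le_rpow_of_nonpos (by linarith [jbr_pos x])
          (by linarith [jbr_le_two_mul_jbr_add (x := x) ht]) (neg_nonpos.mpr hs)
    _ = 2 ^ s * jbr x ^ (-s) := by
        rw [Real.div_rpow (jbr_pos x).le zero_le_two, Real.rpow_neg zero_le_two, div_inv_eq_mul,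
          mul_comm]

lemma jbr_rpow_neg_le_one (hs : 0 ≤ s) : jbr x ^ (-s) ≤ 1 :=
  Real.rpow_le_one_of_one_le_of_nonpos (one_le_jbr x) (neg_nonpos.mpr hs)

lemma jbr_rpow_neg_le_rpow_neg_abs (hx : x ≠ 0) (hs : 0 ≤ s) : jbr x ^ (-s) ≤ |x| ^ (-s) :=
  Real.rpow_le_rpow_of_nonpos (abs_pos.mpr hx) (abs_le_jbr x) (neg_nonpos.mpr hs)

end JapaneseBracket

noncomputable def minRpowNeg (a b x : ℝ) : ℝ := min (x ^ (-a)) (x ^ (-b))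

section MinRpowNeg

variable {a b : ℝ}

lemma minRpowNeg_nonneg {x : ℝ} (hx : 0 ≤ x) : 0 ≤ minRpowNeg a b x :=
  le_min (Real.rpow_nonneg hx _) (Real.rpow_nonneg hx _)

lemma antitoneOn_minRpowNeg (ha : 0 ≤ a) (hb : 0 ≤ b) : AntitoneOn (minRpowNeg a b) (Ioi 0) :=
  fun _ hx _ hy hxy => min_le_min
    (Real.antitoneOn_rpow_Ioi_of_exponent_nonpos (neg_nonpos.mpr ha) hx hy hxy)
    (Real.antitoneOn_rpow_Ioi_of_exponent_nonpos (neg_nonpos.mpr hb) hx hy hxy)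

lemma integrableOn_minRpowNeg (ha : a < 1) (hb : 1 < b) :
    IntegrableOn (minRpowNeg a b) (Ioi 0) := by
  have hmeas : AEStronglyMeasurable (minRpowNeg a b) := by
    unfold minRpowNeg; fun_prop
  have hnorm : ∀ x ∈ Ioi (0 : ℝ), ‖minRpowNeg a b x‖ = minRpowNeg a b x := fun x hx =>
    Real.norm_of_nonneg (minRpowNeg_nonneg (le_of_lt hx))
  rw [← Ioc_union_Ioi_eq_Ioi zero_le_one]
  refine IntegrableOn.union ?_ ?_
  · refine Integrable.mono'
      (intervalIntegral.intervalIntegrable_rpow' (r := -a) (by linarith)).1 hmeas.restrict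
      (ae_restrict_of_forall_mem measurableSet_Ioc fun x hx => ?_)
    rw [hnorm x hx.1]
    exact min_le_left _ _
  · refine Integrable.mono' (integrableOn_Ioi_rpow_of_lt (a := -b) (by linarith) zero_lt_one)
      hmeas.restrict (ae_restrict_of_forall_mem measurableSet_Ioi fun x hx => ?_)
    rw [hnorm x (mem_Ioi.mpr (zero_lt_one.trans hx))]
    exact min_le_right _ _

lemma integral_minRpowNeg_nonneg : 0 ≤ ∫ x in Ioi 0, minRpowNeg a b x :=
  setIntegral_nonneg measurableSet_Ioi fun _ hx => minRpowNeg_nonneg (le_of_lt hx)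

lemma jbr_rpow_neg_le_minRpowNeg {x : ℝ} (hx : x ≠ 0) (hb : 0 ≤ b) :
    jbr x ^ (-b) ≤ minRpowNeg 0 b |x| :=
  le_min (by rw [neg_zero, Real.rpow_zero]; exact jbr_rpow_neg_le_one hb)
    (jbr_rpow_neg_le_rpow_neg_abs hx hb)

/-- The exponent `α / 2` lies in `[α - 1, 1)` for every `α ∈ (0, 2)`: near `0` it dominates
`x^{1-α}` and is still integrable. -/
lemma min_sq_one_mul_rpow_le_minRpowNeg {α x : ℝ} (hα0 : 0 ≤ α) (hα2 : α ≤ 2) (hx : 0 < x) :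
    min (x ^ 2) 1 * x ^ (-(1 + α)) ≤ minRpowNeg (α / 2) (1 + α) x := by
  have htail : min (x ^ 2) 1 * x ^ (-(1 + α)) ≤ x ^ (-(1 + α)) :=
    mul_le_of_le_one_left (Real.rpow_nonneg hx.le _) (min_le_right _ _)
  refine le_min ?_ htail
  rcases le_total x 1 with hx1 | hx1
  · calc min (x ^ 2) 1 * x ^ (-(1 + α)) ≤ x ^ (2 : ℝ) * x ^ (-(1 + α)) := by
          rw [Real.rpow_two]; gcongr; exact min_le_left _ _
      _ = x ^ (1 - α) := by rw [← Real.rpow_add hx]; ring_nf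
      _ ≤ x ^ (-(α / 2)) := Real.rpow_le_rpow_of_exponent_ge hx hx1 (by linarith)
  · exact htail.trans (Real.rpow_le_rpow_of_exponent_le hx1 (by linarith))

end MinRpowNeg

section RiemannSum

variable {G : ℝ → ℝ} {h : ℝ}

lemma le_comp_add_one_mul_of_le_comp_abs {f : ℤ → ℝ} (h0 : 0 < h)
    (hf : ∀ k ≠ 0, f k ≤ G |h * k|) (n : ℕ) :
    f (n + 1) ≤ G ((n + 1) * h) ∧ f (-(n + 1)) ≤ G ((n + 1) * h) := by
  have hpos : |h * (((n : ℤ) + 1 : ℤ) : ℝ)| = (n + 1) * h := by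
    push_cast; rw [abs_of_pos (by positivity)]; ring
  have hneg : |h * ((-((n : ℤ) + 1) : ℤ) : ℝ)| = (n + 1) * h := by
    push_cast; rw [mul_neg, abs_neg, abs_of_pos (by positivity)]; ring
  exact ⟨(hf _ (by omega)).trans_eq (by rw [hpos]), (hf _ (by omega)).trans_eq (by rw [hneg])⟩

variable (hG : AntitoneOn G (Ioi 0)) (hG0 : ∀ x ∈ Ioi 0, 0 ≤ G x)
  (hGi : IntegrableOn G (Ioi 0)) (h0 : 0 < h)
include hG hG0 hGi h0

lemma AntitoneOn.sum_range_comp_add_one_mul_le (N : ℕ) :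
    ∑ n ∈ Finset.range N, G ((n + 1) * h) ≤ (∫ x in Ioi 0, G x) / h := by
  have hint : ∀ n : ℕ, IntervalIntegrable G volume (n * h) ((n + 1 : ℕ) * h) := fun n =>
    (intervalIntegrable_iff_integrableOn_Ioc_of_le (by gcongr; simp)).mpr
      (hGi.mono_set fun x hx => lt_of_le_of_lt (by positivity) hx.1)
  rw [le_div_iff₀ h0, Finset.sum_mul]
  calc ∑ n ∈ Finset.range N, G ((n + 1) * h) * h
      ≤ ∑ n ∈ Finset.range N, ∫ x in (n * h)..((n + 1 : ℕ) * h), G x := by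
        gcongr with n
        have hle : (n : ℝ) * h ≤ (n + 1 : ℕ) * h := by gcongr; simp
        calc G ((n + 1) * h) * h = ∫ _ in (n * h)..((n + 1 : ℕ) * h), G ((n + 1) * h) := by
              simp only [intervalIntegral.integral_const, smul_eq_mul]; push_cast; ring
          _ ≤ _ := intervalIntegral.integral_mono_on_of_le_Ioo hle intervalIntegrable_const
              (hint n) fun x hx => hG (lt_of_le_of_lt (by positivity) hx.1)
                (mem_Ioi.mpr (by positivity)) (by push_cast at hx; exact hx.2.le)
    _ = ∫ x in (0 : ℝ)..(N * h), G x := by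
        rw [intervalIntegral.sum_integral_adjacent_intervals fun k _ => hint k]; simp
    _ ≤ ∫ x in Ioi 0, G x := by
        rw [intervalIntegral.integral_of_le (by positivity)]
        exact setIntegral_mono_set hGi (ae_restrict_of_forall_mem measurableSet_Ioi hG0)
          (Filter.Eventually.of_forall Ioc_subset_Ioi_self)

lemma AntitoneOn.summable_comp_add_one_mul : Summable fun n : ℕ => G ((n + 1) * h) :=
  summable_of_sum_range_le (fun _ => hG0 _ (mem_Ioi.mpr (by positivity)))
    (hG.sum_range_comp_add_one_mul_le hG0 hGi h0)

lemma AntitoneOn.tsum_comp_add_one_mul_le :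
    ∑' n : ℕ, G ((n + 1) * h) ≤ (∫ x in Ioi 0, G x) / h :=
  Real.tsum_le_of_sum_range_le (fun _ => hG0 _ (mem_Ioi.mpr (by positivity)))
    (hG.sum_range_comp_add_one_mul_le hG0 hGi h0)

variable {f : ℤ → ℝ} (hf0 : ∀ k, 0 ≤ f k) (hf : ∀ k ≠ 0, f k ≤ G |h * k|)
include hf0 hf

lemma AntitoneOn.summable_int_of_le : Summable f := by
  have hG' := hG.summable_comp_add_one_mul hG0 hGi h0
  have hle := le_comp_add_one_mul_of_le_comp_abs h0 hf
  exact .of_add_one_of_neg_add_one (hG'.of_nonneg_of_le (fun _ => hf0 _) fun n => (hle n).1)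
    (hG'.of_nonneg_of_le (fun _ => hf0 _) fun n => (hle n).2)

lemma AntitoneOn.tsum_int_le : ∑' k, f k ≤ f 0 + 2 * (∫ x in Ioi 0, G x) / h := by
  have hG' := hG.summable_comp_add_one_mul hG0 hGi h0
  have hle := le_comp_add_one_mul_of_le_comp_abs h0 hf
  have hpos := hG'.of_nonneg_of_le (fun _ => hf0 _) fun n => (hle n).1
  have hneg := hG'.of_nonneg_of_le (fun _ => hf0 _) fun n => (hle n).2
  have := hpos.tsum_le_tsum (fun n => (hle n).1) hG'
  have := hneg.tsum_le_tsum (fun n => (hle n).2) hG'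
  have := hG.tsum_comp_add_one_mul_le hG0 hGi h0
  rw [tsum_of_add_one_of_neg_add_one hpos hneg, mul_div_assoc]
  linarith

end RiemannSum

section Translation

variable {A M : Type*} [AddGroup A] [AddCommMonoid M] [TopologicalSpace M]

lemma tsum_comp_add_right (f : A → M) (a : A) : ∑' x, f (x + a) = ∑' x, f x :=
  (Equiv.addRight a).tsum_eq f

lemma Summable.comp_add_right {f : A → M} (hf : Summable f) (a : A) :
    Summable fun x => f (x + a) :=
  (Equiv.addRight a).summable_iff.mpr hf

end Translation

lemma Summable.tsum_prod_swap {β γ M : Type*} [AddCommMonoid M] [TopologicalSpace M]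
    [ContinuousAdd M] [T3Space M] {f : β → γ → M}
    (hf : Summable fun p : β × γ => f p.1 p.2) (hf₁ : ∀ c, Summable fun b => f b c) :
    ∑' p : β × γ, f p.1 p.2 = ∑' (c) (b), f b c := by
  rw [← (Equiv.prodComm γ β).tsum_eq]
  exact hf.prod_symm.tsum_prod' hf₁

def secondDiff {A : Type*} [AddGroup A] (ν : A → ℝ) (k ℓ : A) : ℝ :=
  2 * ν k - ν (k + ℓ) - ν (k - ℓ)

section SecondDiff

variable {A : Type*} [AddGroup A] {ν : A → ℝ}

@[simp] lemma secondDiff_zero_right (k : A) : secondDiff ν k 0 = 0 := by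
  simp only [secondDiff, add_zero, sub_zero]; ring

variable (hν : Summable ν)
include hν

lemma summable_secondDiff (ℓ : A) : Summable fun k => secondDiff ν k ℓ := by
  simp only [secondDiff, sub_eq_add_neg]
  exact ((hν.mul_left 2).add (hν.comp_add_right ℓ).neg).add (hν.comp_add_right (-ℓ)).neg

lemma tsum_secondDiff_eq_zero (ℓ : A) : ∑' k, secondDiff ν k ℓ = 0 := by
  simp only [secondDiff, sub_eq_add_neg]
  rw [((hν.mul_left 2).add (hν.comp_add_right ℓ).neg).tsum_add (hν.comp_add_right (-ℓ)).neg,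
    (hν.mul_left 2).tsum_add (hν.comp_add_right ℓ).neg, tsum_neg, tsum_neg, tsum_mul_left,
    tsum_comp_add_right, tsum_comp_add_right]
  ring

lemma tsum_abs_secondDiff_le (ℓ : A) : ∑' k, |secondDiff ν k ℓ| ≤ 4 * ∑' k, |ν k| := by
  have hν' := hν.abs
  have hbound : Summable fun k => 2 * |ν k| + |ν (k + ℓ)| + |ν (k + -ℓ)| :=
    ((hν'.mul_left 2).add (hν'.comp_add_right ℓ)).add (hν'.comp_add_right (-ℓ))
  calc ∑' k, |secondDiff ν k ℓ| ≤ ∑' k, (2 * |ν k| + |ν (k + ℓ)| + |ν (k + -ℓ)|) := by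
        refine (summable_secondDiff hν ℓ).abs.tsum_le_tsum (fun k => ?_) hbound
        rw [secondDiff, sub_eq_add_neg k]
        calc _ ≤ |2 * ν k - ν (k + ℓ)| + |ν (k + -ℓ)| := abs_sub _ _
          _ ≤ |2 * ν k| + |ν (k + ℓ)| + |ν (k + -ℓ)| := by gcongr; exact abs_sub _ _
          _ = _ := by rw [abs_mul, abs_two]
    _ = 4 * ∑' k, |ν k| := by
        rw [((hν'.mul_left 2).add (hν'.comp_add_right ℓ)).tsum_add (hν'.comp_add_right (-ℓ)),
          (hν'.mul_left 2).tsum_add (hν'.comp_add_right ℓ), tsum_mul_left,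
          tsum_comp_add_right (fun k => |ν k|), tsum_comp_add_right (fun k => |ν k|)]
        ring

variable {w : A → ℝ} (hw : ∀ ℓ, 0 ≤ w ℓ)
  (hsum : Summable fun ℓ => w ℓ * ∑' k, |secondDiff ν k ℓ|)
include hw hsum

lemma summable_weighted_abs_secondDiff :
    Summable fun p : A × A => w p.2 * |secondDiff ν p.1 p.2| := by
  have hnonneg : 0 ≤ fun q : A × A => w q.1 * |secondDiff ν q.2 q.1| := fun q =>
    mul_nonneg (hw _) (abs_nonneg _)
  have hfiber : ∀ ℓ, Summable fun k => w ℓ * |secondDiff ν k ℓ| := fun ℓ =>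
    (summable_secondDiff hν ℓ).abs.mul_left _
  have hswap := (summable_prod_of_nonneg hnonneg).mpr
    ⟨hfiber, by simpa only [tsum_mul_left] using hsum⟩
  exact hswap.prod_symm

lemma tsum_weighted_abs_secondDiff :
    ∑' p : A × A, w p.2 * |secondDiff ν p.1 p.2| = ∑' ℓ, w ℓ * ∑' k, |secondDiff ν k ℓ| := by
  rw [(summable_weighted_abs_secondDiff hν hw hsum).tsum_prod_swap
    (f := fun k ℓ => w ℓ * |secondDiff ν k ℓ|) fun ℓ => (summable_secondDiff hν ℓ).abs.mul_left _]
  simp only [tsum_mul_left]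

lemma tsum_weighted_secondDiff_eq_zero :
    ∑' p : A × A, w p.2 * secondDiff ν p.1 p.2 = 0 := by
  have hs : Summable fun p : A × A => w p.2 * secondDiff ν p.1 p.2 :=
    .of_abs <| by simpa only [abs_mul, abs_of_nonneg (hw _)] using
      summable_weighted_abs_secondDiff hν hw hsum
  rw [hs.tsum_prod_swap (f := fun k ℓ => w ℓ * secondDiff ν k ℓ)
    fun ℓ => (summable_secondDiff hν ℓ).mul_left _]
  simp only [tsum_mul_left, tsum_secondDiff_eq_zero hν, mul_zero, tsum_zero]

end SecondDiff

lemma abs_two_mul_sub_sub_le {f : ℝ → ℝ} (hf : ContDiff ℝ 2 f) {x d M : ℝ}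
    (hM : ∀ t, |t| ≤ |d| → |deriv (deriv f) (x + t)| ≤ M) :
    |2 * f x - f (x + d) - f (x - d)| ≤ 2 * M * d ^ 2 := by
  have hf1 : Differentiable ℝ f := hf.differentiable (by norm_num)
  have hf2 : Differentiable ℝ (deriv f) :=
    (contDiff_succ_iff_deriv.mp (show ContDiff ℝ (1 + 1) f from hf)).2.2.differentiable
      (by norm_num)
  set D := |d|
  have hD : 0 ≤ D := abs_nonneg d
  have hM0 : 0 ≤ M := (abs_nonneg _).trans (hM 0 (by simpa using hD))
  let g t := f (x + t) + f (x - t)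
  let g₁ t := deriv f (x + t) - deriv f (x - t)
  let g₂ t := deriv (deriv f) (x + t) + deriv (deriv f) (x - t)
  have hg : ∀ t, HasDerivAt g (g₁ t) t := fun t =>
    (((hf1 _).hasDerivAt.comp_const_add x t).add
      ((hf1 _).hasDerivAt.comp_const_sub x t)).congr_deriv (sub_eq_add_neg _ _).symm
  have hg₁ : ∀ t, HasDerivAt g₁ (g₂ t) t := fun t =>
    (((hf2 _).hasDerivAt.comp_const_add x t).sub
      ((hf2 _).hasDerivAt.comp_const_sub x t)).congr_deriv (sub_neg_eq_add _ _)
  have hg₂ : ∀ t ∈ Icc 0 D, ‖g₂ t‖ ≤ 2 * M := fun t ht => by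
    have ht' : |t| ≤ D := by rw [abs_of_nonneg ht.1]; exact ht.2
    calc ‖g₂ t‖ ≤ |deriv (deriv f) (x + t)| + |deriv (deriv f) (x + -t)| := abs_add_le _ _
      _ ≤ 2 * M := by linarith [hM t ht', hM (-t) (by rwa [abs_neg])]
  have hg₁_le : ∀ t ∈ Icc 0 D, ‖g₁ t‖ ≤ 2 * M * D := fun t ht => by
    have := (convex_Icc 0 D).norm_image_sub_le_of_norm_hasDerivWithin_le
      (fun y _ => (hg₁ y).hasDerivWithinAt) hg₂ (left_mem_Icc.mpr hD) ht
    have hg₁0 : g₁ 0 = 0 := by simp [g₁]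
    rw [hg₁0, sub_zero, sub_zero, Real.norm_of_nonneg ht.1] at this
    exact this.trans (by gcongr; exact ht.2)
  have hgD := (convex_Icc 0 D).norm_image_sub_le_of_norm_hasDerivWithin_le
    (fun y _ => (hg y).hasDerivWithinAt) hg₁_le (left_mem_Icc.mpr hD) (right_mem_Icc.mpr hD)
  have hsymm : f (x + D) + f (x - D) = f (x + d) + f (x - d) := by
    rcases abs_cases d with ⟨h, -⟩ | ⟨h, -⟩
    · simp only [D, h]
    · simp only [D, h, sub_neg_eq_add, ← sub_eq_add_neg, add_comm]
  calc |2 * f x - f (x + d) - f (x - d)| = ‖g D - g 0‖ := by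
        rw [Real.norm_eq_abs, abs_sub_comm]; simp only [g, hsymm, add_zero, sub_zero]; ring_nf
    _ ≤ 2 * M * D * ‖D - 0‖ := hgD
    _ = 2 * M * d ^ 2 := by rw [sub_zero, Real.norm_of_nonneg hD, mul_assoc, ← sq, sq_abs]

section LatticeSums

variable {α s h : ℝ}

lemma summable_jbr_rpow (hs : 1 < s) (h0 : 0 < h) : Summable fun k : ℤ => jbr (k * h) ^ (-s) :=
  (antitoneOn_minRpowNeg le_rfl (by linarith)).summable_int_of_le
    (fun _ hx => minRpowNeg_nonneg (le_of_lt hx)) (integrableOn_minRpowNeg zero_lt_one hs) h0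
    (fun _ => Real.rpow_nonneg (jbr_pos _).le _) fun k hk => by
      rw [mul_comm h]
      exact jbr_rpow_neg_le_minRpowNeg (mul_ne_zero (Int.cast_ne_zero.mpr hk) h0.ne') (by linarith)

lemma tsum_jbr_rpow_le (hs : 1 < s) (h0 : 0 < h) (h1 : h ≤ 1) :
    ∑' k : ℤ, jbr (k * h) ^ (-s) ≤ (1 + 2 * ∫ x in Ioi 0, minRpowNeg 0 s x) / h := by
  have := (antitoneOn_minRpowNeg le_rfl (by linarith)).tsum_int_le
    (fun _ hx => minRpowNeg_nonneg (le_of_lt hx)) (integrableOn_minRpowNeg zero_lt_one hs) h0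
    (fun _ => Real.rpow_nonneg (jbr_pos _).le _) fun k hk => by
      rw [mul_comm h]
      exact jbr_rpow_neg_le_minRpowNeg (mul_ne_zero (Int.cast_ne_zero.mpr hk) h0.ne') (by linarith)
  have hjbr0 : jbr (((0 : ℤ) : ℝ) * h) ^ (-s) = 1 := by simp [jbr]
  have hh : 1 ≤ 1 / h := by rw [le_div_iff₀ h0]; linarith
  rw [hjbr0] at this
  rw [add_div]
  linarith

lemma summable_min_sq_mul_rpow (hα0 : 0 < α) (hα2 : α < 2) (h0 : 0 < h) :
    Summable fun ℓ : ℤ => min (|h * ℓ| ^ 2) 1 * |h * ℓ| ^ (-(1 + α)) :=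
  (antitoneOn_minRpowNeg (by positivity) (by linarith)).summable_int_of_le
    (fun _ hx => minRpowNeg_nonneg (le_of_lt hx)) (integrableOn_minRpowNeg (by linarith) (by linarith))
    h0 (fun _ => mul_nonneg (le_min (sq_nonneg _) zero_le_one) (Real.rpow_nonneg (abs_nonneg _) _))
    fun _ hℓ => min_sq_one_mul_rpow_le_minRpowNeg hα0.le hα2.le
      (abs_pos.mpr (mul_ne_zero h0.ne' (Int.cast_ne_zero.mpr hℓ)))

lemma tsum_min_sq_mul_rpow_le (hα0 : 0 < α) (hα2 : α < 2) (h0 : 0 < h) :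
    ∑' ℓ : ℤ, min (|h * ℓ| ^ 2) 1 * |h * ℓ| ^ (-(1 + α))
      ≤ 2 * (∫ x in Ioi 0, minRpowNeg (α / 2) (1 + α) x) / h := by
  have := (antitoneOn_minRpowNeg (by positivity) (by linarith)).tsum_int_le
    (fun _ hx => minRpowNeg_nonneg (le_of_lt hx)) (integrableOn_minRpowNeg (by linarith) (by linarith))
    h0 (fun _ => mul_nonneg (le_min (sq_nonneg _) zero_le_one) (Real.rpow_nonneg (abs_nonneg _) _))
    fun _ hℓ => min_sq_one_mul_rpow_le_minRpowNeg hα0.le hα2.le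
      (abs_pos.mpr (mul_ne_zero h0.ne' (Int.cast_ne_zero.mpr hℓ)))
  simpa using this

end LatticeSums

section Decay

variable {s Cμ h : ℝ} {μ : ℝ → ℝ} (hμbd : ∀ v, |μ v| ≤ Cμ * jbr v ^ (-s))
include hμbd

lemma summable_comp_mul_of_decay (hs : 1 < s) (h0 : 0 < h) : Summable fun k : ℤ => μ (k * h) :=
  ((summable_jbr_rpow hs h0).mul_left Cμ).of_norm_bounded fun _ => hμbd _

lemma tsum_abs_comp_mul_le (hs : 1 < s) (h0 : 0 < h) :
    ∑' k : ℤ, |μ (k * h)| ≤ Cμ * ∑' k : ℤ, jbr (k * h) ^ (-s) := by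
  rw [← tsum_mul_left]
  exact (summable_comp_mul_of_decay hμbd hs h0).abs.tsum_le_tsum (fun _ => hμbd _)
    ((summable_jbr_rpow hs h0).mul_left Cμ)

end Decay

section StableDensity

variable {α Cμ h : ℝ} {μ : ℝ → ℝ}

lemma abs_two_mul_sub_sub_le_of_decay (hα : 0 ≤ α) (hμ : ContDiff ℝ 2 μ) (hC : 0 ≤ Cμ)
    (hμ'' : ∀ v, |deriv (deriv μ) v| ≤ Cμ * jbr v ^ (-(3 + α))) (x : ℝ) {d : ℝ} (hd : |d| ≤ 1) :
    |2 * μ x - μ (x + d) - μ (x - d)| ≤ 2 * 2 ^ (3 + α) * Cμ * d ^ 2 * jbr x ^ (-(1 + α)) := by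
  have := abs_two_mul_sub_sub_le hμ (M := 2 ^ (3 + α) * Cμ * jbr x ^ (-(1 + α))) fun t ht =>
    calc |deriv (deriv μ) (x + t)| ≤ Cμ * jbr (x + t) ^ (-(3 + α)) := hμ'' _
      _ ≤ Cμ * (2 ^ (3 + α) * jbr x ^ (-(3 + α))) := by
          gcongr; exact jbr_add_rpow_neg_le (ht.trans hd) (by linarith)
      _ ≤ Cμ * (2 ^ (3 + α) * jbr x ^ (-(1 + α))) := by
          gcongr; exacts [one_le_jbr x, by linarith]
      _ = 2 ^ (3 + α) * Cμ * jbr x ^ (-(1 + α)) := by ring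
  linarith

variable (hα0 : 0 < α) (hμ : ContDiff ℝ 2 μ) (hC : 0 ≤ Cμ)
  (hμbd : ∀ v, |μ v| ≤ Cμ * jbr v ^ (-(1 + α)))
  (hμ'' : ∀ v, |deriv (deriv μ) v| ≤ Cμ * jbr v ^ (-(3 + α))) (h0 : 0 < h)
include hα0 hμ hC hμbd hμ'' h0

lemma tsum_abs_secondDiff_comp_mul_le (ℓ : ℤ) :
    ∑' k, |secondDiff (fun j : ℤ => μ (j * h)) k ℓ|
      ≤ 2 * 2 ^ (3 + α) * Cμ * min (|h * ℓ| ^ 2) 1 * ∑' k : ℤ, jbr (k * h) ^ (-(1 + α)) := by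
  have hs : 1 < 1 + α := by linarith
  have hW := summable_jbr_rpow hs h0
  have hν := summable_comp_mul_of_decay hμbd hs h0
  rcases le_or_gt |h * ℓ| 1 with hsmall | hlarge
  · rw [min_eq_left (pow_le_one₀ (abs_nonneg _) hsmall), ← tsum_mul_left]
    refine (summable_secondDiff hν ℓ).abs.tsum_le_tsum (fun k => ?_) (hW.mul_left _)
    have hd : |ℓ * h| ≤ 1 := by rwa [mul_comm]
    simp only [secondDiff, Int.cast_add, Int.cast_sub, add_mul, sub_mul]
    exact (abs_two_mul_sub_sub_le_of_decay hα0.le hμ hC hμ'' (k * h) hd).trans_eq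
      (by rw [sq_abs, mul_comm h])
  · have h2 : (2 : ℝ) ≤ 2 ^ (3 + α) := by
      simpa using Real.rpow_le_rpow_of_exponent_le one_le_two (show (1 : ℝ) ≤ 3 + α by linarith)
    rw [min_eq_right (one_le_pow₀ hlarge.le), mul_one]
    calc ∑' k, |secondDiff (fun j : ℤ => μ (j * h)) k ℓ| ≤ 4 * ∑' k : ℤ, |μ (k * h)| :=
          tsum_abs_secondDiff_le hν ℓ
      _ ≤ 4 * (Cμ * ∑' k : ℤ, jbr (k * h) ^ (-(1 + α))) := by
          gcongr; exact tsum_abs_comp_mul_le hμbd hs h0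
      _ ≤ _ := by
          rw [← mul_assoc]
          gcongr
          · exact tsum_nonneg fun _ => Real.rpow_nonneg (jbr_pos _).le _
          · linarith

variable {B : ℝ} {w : ℤ → ℝ} (hw : ∀ ℓ, 0 ≤ w ℓ)
  (hwB : ∀ ℓ ≠ 0, w ℓ ≤ B * |h * ℓ| ^ (-(1 + α)) * h ^ 2)
include hw hwB

lemma mul_tsum_abs_secondDiff_le (ℓ : ℤ) :
    w ℓ * ∑' k, |secondDiff (fun j : ℤ => μ (j * h)) k ℓ|
      ≤ 2 * 2 ^ (3 + α) * Cμ * B * h ^ 2 * (∑' k : ℤ, jbr (k * h) ^ (-(1 + α)))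
        * (min (|h * ℓ| ^ 2) 1 * |h * ℓ| ^ (-(1 + α))) := by
  rcases eq_or_ne ℓ 0 with rfl | hℓ
  · simp
  have hW : 0 ≤ ∑' k : ℤ, jbr (k * h) ^ (-(1 + α)) :=
    tsum_nonneg fun _ => Real.rpow_nonneg (jbr_pos _).le _
  have hK : (0 : ℝ) ≤ 2 * 2 ^ (3 + α) * Cμ := mul_nonneg (by positivity) hC
  calc w ℓ * ∑' k, |secondDiff (fun j : ℤ => μ (j * h)) k ℓ|
      ≤ w ℓ * (2 * 2 ^ (3 + α) * Cμ * min (|h * ℓ| ^ 2) 1 * ∑' k : ℤ, jbr (k * h) ^ (-(1 + α))) :=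
        mul_le_mul_of_nonneg_left
          (tsum_abs_secondDiff_comp_mul_le hα0 hμ hC hμbd hμ'' h0 ℓ) (hw ℓ)
    _ ≤ B * |h * ℓ| ^ (-(1 + α)) * h ^ 2
          * (2 * 2 ^ (3 + α) * Cμ * min (|h * ℓ| ^ 2) 1 * ∑' k : ℤ, jbr (k * h) ^ (-(1 + α))) :=
        mul_le_mul_of_nonneg_right (hwB ℓ hℓ)
          (mul_nonneg (mul_nonneg hK (le_min (sq_nonneg _) zero_le_one)) hW)
    _ = _ := by ring

variable (hα2 : α < 2)
include hα2

lemma summable_mul_tsum_abs_secondDiff :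
    Summable fun ℓ => w ℓ * ∑' k, |secondDiff (fun j : ℤ => μ (j * h)) k ℓ| :=
  ((summable_min_sq_mul_rpow hα0 hα2 h0).mul_left _).of_nonneg_of_le
    (fun ℓ => mul_nonneg (hw ℓ) (tsum_nonneg fun _ => abs_nonneg _))
    (mul_tsum_abs_secondDiff_le hα0 hμ hC hμbd hμ'' h0 hw hwB)

lemma tsum_mul_tsum_abs_secondDiff_le (hB : 0 ≤ B) (h1 : h ≤ 1) :
    ∑' ℓ, w ℓ * ∑' k, |secondDiff (fun j : ℤ => μ (j * h)) k ℓ|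
      ≤ 2 * 2 ^ (3 + α) * Cμ * B * (1 + 2 * ∫ x in Ioi 0, minRpowNeg 0 (1 + α) x)
        * (2 * ∫ x in Ioi 0, minRpowNeg (α / 2) (1 + α) x) := by
  set I₁ := ∫ x in Ioi 0, minRpowNeg 0 (1 + α) x
  set I₂ := ∫ x in Ioi 0, minRpowNeg (α / 2) (1 + α) x
  have hU := summable_min_sq_mul_rpow hα0 hα2 h0
  have hKB : (0 : ℝ) ≤ 2 * 2 ^ (3 + α) * Cμ * B * h ^ 2 := by
    have : (0 : ℝ) ≤ 2 * 2 ^ (3 + α) := by positivity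
    exact mul_nonneg (mul_nonneg (mul_nonneg this hC) hB) (sq_nonneg h)
  calc ∑' ℓ, w ℓ * ∑' k, |secondDiff (fun j : ℤ => μ (j * h)) k ℓ|
      ≤ ∑' ℓ : ℤ, 2 * 2 ^ (3 + α) * Cμ * B * h ^ 2 * (∑' k : ℤ, jbr (k * h) ^ (-(1 + α)))
          * (min (|h * ℓ| ^ 2) 1 * |h * ℓ| ^ (-(1 + α))) :=
        (summable_mul_tsum_abs_secondDiff hα0 hμ hC hμbd hμ'' h0 hw hwB hα2).tsum_le_tsum
          (mul_tsum_abs_secondDiff_le hα0 hμ hC hμbd hμ'' h0 hw hwB) (hU.mul_left _)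
    _ = 2 * 2 ^ (3 + α) * Cμ * B * h ^ 2 * ((∑' k : ℤ, jbr (k * h) ^ (-(1 + α)))
          * ∑' ℓ : ℤ, min (|h * ℓ| ^ 2) 1 * |h * ℓ| ^ (-(1 + α))) := by
        rw [tsum_mul_left, mul_assoc]
    _ ≤ 2 * 2 ^ (3 + α) * Cμ * B * h ^ 2 * ((1 + 2 * I₁) / h * (2 * I₂ / h)) := by
        refine mul_le_mul_of_nonneg_left (mul_le_mul (tsum_jbr_rpow_le (by linarith) h0 h1)
          (tsum_min_sq_mul_rpow_le hα0 hα2 h0) (tsum_nonneg fun _ => ?_)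
          (div_nonneg (by linarith [integral_minRpowNeg_nonneg (a := 0) (b := 1 + α)]) h0.le)) hKB
        exact mul_nonneg (le_min (sq_nonneg _) zero_le_one) (Real.rpow_nonneg (abs_nonneg _) _)
    _ = 2 * 2 ^ (3 + α) * Cμ * B * (1 + 2 * I₁) * (2 * I₂) := by field_simp

end StableDensity

/-- uniform bound on
`S̃ = ∑_{k, ℓ≠0} β_ℓ^h |2M_k - M_{k+ℓ} - M_{k-ℓ}| h²` with `M_j = μ_α(jh)`, and vanishing
of the corresponding signed sum. -/
theorem stmt17 (α : ℝ) (hα0 : 0 < α) (hα2 : α < 2)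
    (μ : ℝ → ℝ) (hμreg : ContDiff ℝ 2 μ) (Cμ : ℝ)
    (hμbd : ∀ v : ℝ, |μ v| ≤ Cμ * jbr v ^ (-(1 + α)))
    (hμ'' : ∀ v : ℝ, |deriv (deriv μ) v| ≤ Cμ * jbr v ^ (-(3 + α)))
    (b B : ℝ) (hb : 0 < b) (hbB : b ≤ B) :
    ∃ C > 0, ∀ h : ℝ, 0 < h → h ≤ 1 → ∀ β : ℤ → ℝ,
      (∀ k : ℤ, k ≠ 0 → b * |h * (k : ℝ)| ^ (-(1 + α)) ≤ β k ∧
        β k ≤ B * |h * (k : ℝ)| ^ (-(1 + α))) →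
      Summable (fun p : ℤ × ℤ =>
        if p.2 = 0 then 0
        else β p.2 * |2 * μ ((p.1 : ℝ) * h) - μ (((p.1 + p.2 : ℤ) : ℝ) * h)
          - μ (((p.1 - p.2 : ℤ) : ℝ) * h)| * h ^ 2) ∧
      (∑' p : ℤ × ℤ,
        (if p.2 = 0 then 0
        else β p.2 * |2 * μ ((p.1 : ℝ) * h) - μ (((p.1 + p.2 : ℤ) : ℝ) * h)
          - μ (((p.1 - p.2 : ℤ) : ℝ) * h)| * h ^ 2)) ≤ C ∧
      (∑' p : ℤ × ℤ,
        (if p.2 = 0 then 0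
        else β p.2 * (2 * μ ((p.1 : ℝ) * h) - μ (((p.1 + p.2 : ℤ) : ℝ) * h)
          - μ (((p.1 - p.2 : ℤ) : ℝ) * h)) * h ^ 2)) = 0 := by
  have hC : 0 ≤ Cμ := by simpa [jbr] using (abs_nonneg _).trans (hμbd 0)
  have hB : 0 ≤ B := hb.le.trans hbB
  have hI₁ := integral_minRpowNeg_nonneg (a := 0) (b := 1 + α)
  have hI₂ := integral_minRpowNeg_nonneg (a := α / 2) (b := 1 + α)
  refine ⟨2 * 2 ^ (3 + α) * Cμ * B * (1 + 2 * ∫ x in Ioi 0, minRpowNeg 0 (1 + α) x)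
      * (2 * ∫ x in Ioi 0, minRpowNeg (α / 2) (1 + α) x) + 1, by positivity,
    fun h h0 h1 β hβ => ?_⟩
  set w : ℤ → ℝ := fun ℓ => if ℓ = 0 then 0 else β ℓ * h ^ 2
  have hw : ∀ ℓ, 0 ≤ w ℓ := fun ℓ => by
    by_cases hℓ : ℓ = 0
    · simp [w, hℓ]
    · exact (if_neg hℓ).trans_ge <|
        mul_nonneg ((by positivity : (0 : ℝ) ≤ _).trans (hβ ℓ hℓ).1) (sq_nonneg h)
  have hwB : ∀ ℓ ≠ 0, w ℓ ≤ B * |h * ℓ| ^ (-(1 + α)) * h ^ 2 := fun ℓ hℓ =>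
    (if_neg hℓ).trans_le (mul_le_mul_of_nonneg_right (hβ ℓ hℓ).2 (sq_nonneg h))
  have hν := summable_comp_mul_of_decay hμbd (by linarith) h0
  have hsum := summable_mul_tsum_abs_secondDiff hα0 hμreg hC hμbd hμ'' h0 hw hwB hα2
  have hw_mul : ∀ (ℓ : ℤ) (x : ℝ), (if ℓ = 0 then 0 else β ℓ * x * h ^ 2) = w ℓ * x :=
    fun ℓ x => by by_cases hℓ : ℓ = 0 <;> simp [w, hℓ, mul_right_comm]
  simp only [hw_mul]
  refine ⟨summable_weighted_abs_secondDiff hν hw hsum, ?_,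
    tsum_weighted_secondDiff_eq_zero hν hw hsum⟩
  exact (tsum_weighted_abs_secondDiff hν hw hsum).trans_le
    ((tsum_mul_tsum_abs_secondDiff_le hα0 hμreg hC hμbd hμ'' h0 hw hwB hα2 hB h1).trans
      (le_add_of_nonneg_right zero_le_one))
end
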